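/- arXiv:2002.00526 — 4 statements merged into one kernel-verified Lean document; each statement's English description precedes it below -/
import Mathlib

section
/- Let d be a positive natural number and let F : EuclideanSpace ℝ (Fin d) → ℝ be three times continuously differentiable, with the norm of the third iterated Fréchet derivative bounded by M ≥ 0 at every point. Let x, x̃⁺, x̃⁻ ∈ EuclideanSpace ℝ (Fin d) and let K ⊆ Fin d be such that x̃⁺ₖ = xₖ and x̃⁻ₖ = xₖ for every k ∉ K (the decoys differ from x only on the swappable feature set K). For each coordinate i, define the decoy-enhanced saliency score Zᵢ = max(∂F/∂xᵢ(x̃⁺), ∂F/∂xᵢ(x̃⁻)) − min(∂F/∂xᵢ(x̃⁺), ∂F/∂xᵢ(x̃⁻)). Then for every i, | Zᵢ − |∑_{k ∈ K} (x̃⁺ₖ − x̃⁻ₖ) · (∂²F/∂xₖ∂xᵢ)(x)| | ≤ (M/2) · (‖x̃⁺ − x‖² + ‖x̃⁻ − x‖²). -/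
/-!
`Zᵢ = |∂ᵢF(x̃⁺) - ∂ᵢF(x̃⁻)|`, and since `x̃⁺ - x̃⁻` is supported on `K`,
the Hessian-weighted sum is `H_x(x̃⁺ - x)eᵢ - H_x(x̃⁻ - x)eᵢ`. The two absolute values therefore
differ by at most the sum of the first-order Taylor remainders of `∇F` around `x` at `x̃⁺` and
at `x̃⁻`. The bound `M` on `D³F` makes `D²F` `M`-Lipschitz, so each remainder is at most
`M/2 ‖y - x‖²`.
-/

open Set

section Taylor

variable {E F : Type*} [NormedAddCommGroup E] [NormedSpace ℝ E]
  [NormedAddCommGroup F] [NormedSpace ℝ F]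

theorem norm_image_sub_sub_fderiv_le_of_norm_fderiv_sub_le {g : E → F} {M : ℝ}
    (hg : Differentiable ℝ g) {x : E}
    (hlip : ∀ z, ‖fderiv ℝ g z - fderiv ℝ g x‖ ≤ M * ‖z - x‖) (y : E) :
    ‖g y - g x - fderiv ℝ g x (y - x)‖ ≤ M / 2 * ‖y - x‖ ^ 2 := by
  set v := y - x
  have hφ : ∀ t : ℝ, HasDerivAt (fun s : ℝ => g (x + s • v) - g x - s • fderiv ℝ g x v)
      (fderiv ℝ g (x + t • v) v - fderiv ℝ g x v) t := by
    intro t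
    have hpath : HasDerivAt (fun s : ℝ => x + s • v) v t := by
      simpa using ((hasDerivAt_id t).smul_const v).const_add x
    have hlin : HasDerivAt (fun s : ℝ => s • fderiv ℝ g x v) (fderiv ℝ g x v) t := by
      simpa using (hasDerivAt_id t).smul_const (fderiv ℝ g x v)
    exact (((hg _).hasFDerivAt.comp_hasDerivAt t hpath).sub_const (g x)).sub hlin
  have hB (t : ℝ) : HasDerivAt (fun s => M / 2 * ‖v‖ ^ 2 * s ^ 2) (M * ‖v‖ ^ 2 * t) t :=
    ((hasDerivAt_pow 2 t).const_mul _).congr_deriv (by push_cast; ring)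
  have hbound : ∀ t ∈ Ico (0 : ℝ) 1,
      ‖fderiv ℝ g (x + t • v) v - fderiv ℝ g x v‖ ≤ M * ‖v‖ ^ 2 * t := by
    rintro t ⟨ht, -⟩
    calc ‖fderiv ℝ g (x + t • v) v - fderiv ℝ g x v‖
        ≤ ‖fderiv ℝ g (x + t • v) - fderiv ℝ g x‖ * ‖v‖ :=
          (fderiv ℝ g (x + t • v) - fderiv ℝ g x).le_opNorm v
      _ ≤ M * ‖t • v‖ * ‖v‖ := by
          gcongr
          simpa using hlip (x + t • v)
      _ = M * ‖v‖ ^ 2 * t := by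
          rw [norm_smul, Real.norm_of_nonneg ht]; ring
  -- the remainder along the segment is fenced by `t ↦ M / 2 * ‖v‖ ^ 2 * t ^ 2` on `[0, 1]`
  have := image_norm_le_of_norm_deriv_right_le_deriv_boundary
    (fun t _ => (hφ t).continuousAt.continuousWithinAt) (fun t _ => (hφ t).hasDerivWithinAt)
    (by simp) hB hbound (right_mem_Icc.2 zero_le_one)
  simpa [v] using this

theorem norm_fderiv_fderiv_sub_le_of_norm_iteratedFDeriv_three_le {f : E → F} {M : ℝ}
    (hf : ContDiff ℝ 3 f) (hM : ∀ z, ‖iteratedFDeriv ℝ 3 f z‖ ≤ M) (a b : E) :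
    ‖fderiv ℝ (fderiv ℝ f) a - fderiv ℝ (fderiv ℝ f) b‖ ≤ M * ‖a - b‖ := by
  have hdiff : Differentiable ℝ (fderiv ℝ (fderiv ℝ f)) :=
    ((hf.fderiv_right (m := 2) (by norm_num)).fderiv_right (m := 1) (by norm_num)).differentiable
      (by norm_num)
  refine convex_univ.norm_image_sub_le_of_norm_fderiv_le (𝕜 := ℝ) (f := fderiv ℝ (fderiv ℝ f))
    (fun z _ => hdiff z) (fun z _ => ?_) (mem_univ b) (mem_univ a)
  rw [← norm_iteratedFDeriv_one, norm_iteratedFDeriv_fderiv, norm_iteratedFDeriv_fderiv]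
  exact hM z

theorem norm_fderiv_sub_sub_fderiv_fderiv_le {f : E → F} {M : ℝ}
    (hf : ContDiff ℝ 3 f) (hM : ∀ z, ‖iteratedFDeriv ℝ 3 f z‖ ≤ M) (x y : E) :
    ‖fderiv ℝ f y - fderiv ℝ f x - fderiv ℝ (fderiv ℝ f) x (y - x)‖ ≤ M / 2 * ‖y - x‖ ^ 2 :=
  norm_image_sub_sub_fderiv_le_of_norm_fderiv_sub_le
    ((hf.fderiv_right (m := 2) (by norm_num)).differentiable (by norm_num))
    (fun z => norm_fderiv_fderiv_sub_le_of_norm_iteratedFDeriv_three_le hf hM z x) y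

theorem norm_fderiv_apply_sub_sub_fderiv_fderiv_apply_le {f : E → F} {M : ℝ}
    (hf : ContDiff ℝ 3 f) (hM : ∀ z, ‖iteratedFDeriv ℝ 3 f z‖ ≤ M) (x y e : E) :
    ‖fderiv ℝ f y e - fderiv ℝ f x e - fderiv ℝ (fderiv ℝ f) x (y - x) e‖ ≤
      M / 2 * ‖y - x‖ ^ 2 * ‖e‖ :=
  ((fderiv ℝ f y - fderiv ℝ f x - fderiv ℝ (fderiv ℝ f) x (y - x)).le_opNorm e).trans <|
    mul_le_mul_of_nonneg_right (norm_fderiv_sub_sub_fderiv_fderiv_le hf hM x y) (norm_nonneg e)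

theorem fderiv_fderiv_apply_const {f : E → F} {x : E}
    (hf : DifferentiableAt ℝ (fderiv ℝ f) x) (u v : E) :
    fderiv ℝ (fun z => fderiv ℝ f z u) x v = fderiv ℝ (fderiv ℝ f) x v u := by
  rw [fderiv_clm_apply hf (differentiableAt_const u)]
  simp

end Taylor

theorem EuclideanSpace.sum_smul_map_single_of_eq_zero {𝕜 ι M : Type*} [RCLike 𝕜] [Fintype ι]
    [DecidableEq ι] [AddCommMonoid M] [Module 𝕜 M] (ℓ : EuclideanSpace 𝕜 ι →ₗ[𝕜] M)
    {K : Finset ι} {u : EuclideanSpace 𝕜 ι} (hu : ∀ k ∉ K, u k = 0) :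
    ∑ k ∈ K, u k • ℓ (EuclideanSpace.single k 1) = ℓ u := by
  conv_rhs => rw [← (EuclideanSpace.basisFun ι 𝕜).sum_repr u]
  rw [map_sum, Finset.sum_subset K.subset_univ (fun k _ hk => by simp [hu k hk])]
  simp

theorem abs_abs_sub_sub_abs_sub_le (a b c p q : ℝ) :
    |(|a - b| - |p - q|)| ≤ |a - c - p| + |b - c - q| :=
  calc |(|a - b| - |p - q|)| ≤ |(a - b) - (p - q)| := abs_abs_sub_abs_le_abs_sub _ _
    _ = |(a - c - p) - (b - c - q)| := by ring_nf
    _ ≤ |a - c - p| + |b - c - q| := abs_sub _ _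

theorem decoy_saliency_hessian_bound_general
    (d : ℕ)
    (F : EuclideanSpace ℝ (Fin d) → ℝ) (M : ℝ)
    (hF : ContDiff ℝ 3 F)
    (hM3 : ∀ z : EuclideanSpace ℝ (Fin d), ‖iteratedFDeriv ℝ 3 F z‖ ≤ M)
    (x xp xm : EuclideanSpace ℝ (Fin d)) (K : Finset (Fin d))
    (hxp : ∀ k : Fin d, k ∉ K → xp k = x k)
    (hxm : ∀ k : Fin d, k ∉ K → xm k = x k)
    (Z : Fin d → ℝ)
    (hZ : ∀ i : Fin d,
      Z i = max (fderiv ℝ F xp (EuclideanSpace.single i 1))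
                (fderiv ℝ F xm (EuclideanSpace.single i 1))
          - min (fderiv ℝ F xp (EuclideanSpace.single i 1))
                (fderiv ℝ F xm (EuclideanSpace.single i 1)))
    (i : Fin d) :
    abs (Z i - |∑ k ∈ K, (xp k - xm k) *
        fderiv ℝ (fun z => fderiv ℝ F z (EuclideanSpace.single i 1)) x
          (EuclideanSpace.single k 1)|)
      ≤ M / 2 * (‖xp - x‖ ^ 2 + ‖xm - x‖ ^ 2) := by
  set e := EuclideanSpace.single i (1 : ℝ)
  set H := fderiv ℝ (fderiv ℝ F) x
  have hH : DifferentiableAt ℝ (fderiv ℝ F) x :=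
    (hF.fderiv_right (m := 2) (by norm_num)).differentiable (by norm_num) x
  have hTaylor (y : EuclideanSpace ℝ (Fin d)) :
      |fderiv ℝ F y e - fderiv ℝ F x e - H (y - x) e| ≤ M / 2 * ‖y - x‖ ^ 2 := by
    simpa [e] using norm_fderiv_apply_sub_sub_fderiv_fderiv_apply_le hF hM3 x y e
  have hHessian : ∑ k ∈ K, (xp k - xm k) *
      fderiv ℝ (fun z => fderiv ℝ F z e) x (EuclideanSpace.single k 1) =
        H (xp - x) e - H (xm - x) e := by
    have := EuclideanSpace.sum_smul_map_single_of_eq_zero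
      ((ContinuousLinearMap.apply ℝ ℝ e).comp H).toLinearMap (u := xp - xm) (K := K)
      (fun k hk => by simp [hxp k hk, hxm k hk])
    rw [← sub_apply, ← map_sub, sub_sub_sub_cancel_right]
    simpa [fderiv_fderiv_apply_const hH] using this
  rw [hZ i, max_sub_min_eq_abs', hHessian]
  calc _ ≤ |fderiv ℝ F xp e - fderiv ℝ F x e - H (xp - x) e| +
        |fderiv ℝ F xm e - fderiv ℝ F x e - H (xm - x) e| :=
        abs_abs_sub_sub_abs_sub_le _ _ _ _ _
    _ ≤ M / 2 * ‖xp - x‖ ^ 2 + M / 2 * ‖xm - x‖ ^ 2 := add_le_add (hTaylor xp) (hTaylor xm)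
    _ = M / 2 * (‖xp - x‖ ^ 2 + ‖xm - x‖ ^ 2) := by ring

/-- Theorem 1 of the paper (explicit-constant instantiation): the
decoy-enhanced saliency score `Zᵢ`, defined as the range of the vanilla
gradient saliency scores of the two decoys `x̃⁺` and `x̃⁻` (which agree with
`x` off the swappable feature set `K`), deviates from the magnitude of the
Hessian-weighted sum `∑_{k ∈ K} (x̃⁺ₖ - x̃⁻ₖ)(H_x)_{k,i}` by at most
`(M/2)(‖x̃⁺ - x‖² + ‖x̃⁻ - x‖²)`, where `M` bounds the third iterated Fréchet
derivative of `F`. -/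
theorem decoy_saliency_hessian_bound
    (d : ℕ) (hd : 0 < d)
    (F : EuclideanSpace ℝ (Fin d) → ℝ) (M : ℝ) (hM : 0 ≤ M)
    (hF : ContDiff ℝ 3 F)
    (hM3 : ∀ z : EuclideanSpace ℝ (Fin d), ‖iteratedFDeriv ℝ 3 F z‖ ≤ M)
    (x xp xm : EuclideanSpace ℝ (Fin d)) (K : Finset (Fin d))
    (hxp : ∀ k : Fin d, k ∉ K → xp k = x k)
    (hxm : ∀ k : Fin d, k ∉ K → xm k = x k)
    (Z : Fin d → ℝ)
    (hZ : ∀ i : Fin d,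
      Z i = max (fderiv ℝ F xp (EuclideanSpace.single i 1))
                (fderiv ℝ F xm (EuclideanSpace.single i 1))
          - min (fderiv ℝ F xp (EuclideanSpace.single i 1))
                (fderiv ℝ F xm (EuclideanSpace.single i 1)))
    (i : Fin d) :
    abs (Z i - |∑ k ∈ K, (xp k - xm k) *
        fderiv ℝ (fun z => fderiv ℝ F z (EuclideanSpace.single i 1)) x
          (EuclideanSpace.single k 1)|)
      ≤ M / 2 * (‖xp - x‖ ^ 2 + ‖xm - x‖ ^ 2) :=
  decoy_saliency_hessian_bound_general d F M hF hM3 x xp xm K hxp hxm Z hZ i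
end

section
/- Let d be a positive natural number and let F : EuclideanSpace ℝ (Fin d) → ℝ be three times continuously differentiable, with the norm of the third iterated Fréchet derivative bounded by M ≥ 0 at every point. Let x̃⁺, x̃⁻ ∈ EuclideanSpace ℝ (Fin d), set x = (x̃⁺ + x̃⁻)/2 (the decoys are symmetric around the original input), and let K ⊆ Fin d be such that x̃⁺ₖ = x̃⁻ₖ for every k ∉ K. Then for every coordinate i, | |∂F/∂xᵢ(x̃⁺) − ∂F/∂xᵢ(x)| − (1/2)·|∑_{k ∈ K} (x̃⁺ₖ − x̃⁻ₖ) · (∂²F/∂xₖ∂xᵢ)(x)| | ≤ (M/8) · ‖x̃⁺ − x̃⁻‖². -/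
/-!
Let `G = ∂F/∂xᵢ` and `v = (x̃⁺ - x̃⁻)/2`, so that `x̃⁺ = x + v`. The second-order Taylor expansion
of `G` along the segment from `x` to `x̃⁺`, with Lagrange remainder, gives
`|G(x̃⁺) - G(x) - DG(x) v| ≤ (M/2)‖v‖²`, because `D²G` is a slice of `D³F`. Since `x̃⁺ - x̃⁻` is
supported on `K`, `DG(x) v` is half the Hessian-weighted sum over `K`, and the reverse triangle
inequality `||a| - |b|| ≤ |a - b|` concludes.
-/

open Set

section IteratedFDeriv

variable {𝕜 E F : Type*} [NontriviallyNormedField 𝕜] [NormedAddCommGroup E] [NormedSpace 𝕜 E]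
  [NormedAddCommGroup F] [NormedSpace 𝕜 F]

theorem iteratedDeriv_comp_add_smul {f : E → F} {n : ℕ} (hf : ContDiff 𝕜 n f) (x v : E) (t : 𝕜) :
    iteratedDeriv n (fun s => f (x + s • v)) t = iteratedFDeriv 𝕜 n f (x + t • v) (fun _ => v) := by
  have h := (ContinuousLinearMap.toSpanSingleton 𝕜 v).iteratedFDeriv_comp_right
    (f := fun z => f (x + z)) (hf.comp (contDiff_const.add contDiff_id)) t le_rfl
  rw [iteratedDeriv_eq_iteratedFDeriv]
  change iteratedFDeriv 𝕜 n ((fun z => f (x + z)) ∘ ContinuousLinearMap.toSpanSingleton 𝕜 v) t _ = _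
  rw [h, iteratedFDeriv_comp_add_left]
  simp

theorem iteratedFDeriv_fderiv_apply {f : E → F} {n : ℕ} (hf : ContDiff 𝕜 (n + 1) f) (e x : E)
    (m : Fin n → E) :
    iteratedFDeriv 𝕜 n (fun y => fderiv 𝕜 f y e) x m =
      iteratedFDeriv 𝕜 (n + 1) f x (Fin.snoc m e) := by
  rw [iteratedFDeriv_succ_apply_right, Fin.init_snoc, Fin.snoc_last]
  have hcomp := (ContinuousLinearMap.apply 𝕜 F e).iteratedFDeriv_comp_left
    (hf.fderiv_right le_rfl).contDiffAt (x := x) le_rfl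
  exact congrArg (fun L => L m) hcomp

end IteratedFDeriv

theorem abs_sub_sub_deriv_le_of_abs_iteratedDeriv_two_le {g : ℝ → ℝ} (hg : ContDiff ℝ 2 g) {C : ℝ}
    (hC : ∀ t ∈ Ioo (0 : ℝ) 1, |iteratedDeriv 2 g t| ≤ C) : |g 1 - g 0 - deriv g 0| ≤ C / 2 := by
  obtain ⟨t, ht, hT⟩ :=
    taylor_mean_remainder_lagrange_iteratedDeriv (n := 1) (zero_ne_one' ℝ) hg.contDiffOn
  rw [uIoo_of_le zero_le_one] at ht
  have hT0 : taylorWithinEval g 1 (uIcc 0 1) 0 1 = g 0 + deriv g 0 := by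
    rw [taylorWithinEval_succ, taylor_within_zero_eval, iteratedDerivWithin_one,
      uIcc_of_le zero_le_one, (hg.differentiable two_ne_zero 0).derivWithin
        (uniqueDiffOn_Icc zero_lt_one 0 (left_mem_Icc.2 zero_le_one))]
    norm_num
  calc |g 1 - g 0 - deriv g 0| = |iteratedDeriv 2 g t| / 2 := by
        rw [sub_sub, ← hT0, hT]
        norm_num [abs_div]
    _ ≤ C / 2 := by gcongr; exact hC t ht

section RealValued

variable {E : Type*} [NormedAddCommGroup E] [NormedSpace ℝ E]

theorem abs_sub_sub_fderiv_le_of_abs_iteratedFDeriv_two_le {G : E → ℝ} (hG : ContDiff ℝ 2 G)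
    (x v : E) {C : ℝ}
    (hC : ∀ t ∈ Ioo (0 : ℝ) 1, |iteratedFDeriv ℝ 2 G (x + t • v) (fun _ => v)| ≤ C) :
    |G (x + v) - G x - fderiv ℝ G x v| ≤ C / 2 := by
  have hline : ContDiff ℝ 2 (fun t : ℝ => G (x + t • v)) :=
    hG.comp (contDiff_const.add (contDiff_id.smul contDiff_const))
  have hderiv : deriv (fun t : ℝ => G (x + t • v)) 0 = fderiv ℝ G x v := by
    rw [← iteratedDeriv_one, iteratedDeriv_comp_add_smul (hG.of_le one_le_two),
      iteratedFDeriv_one_apply, zero_smul, add_zero]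
  have h := abs_sub_sub_deriv_le_of_abs_iteratedDeriv_two_le hline fun t ht => by
    rw [iteratedDeriv_comp_add_smul hG]
    exact hC t ht
  simpa only [one_smul, zero_smul, add_zero, hderiv] using h

theorem abs_fderiv_apply_add_sub_sub_le {F : E → ℝ} {M : ℝ} (hF : ContDiff ℝ 3 F)
    (hM : ∀ z, ‖iteratedFDeriv ℝ 3 F z‖ ≤ M) (x v e : E) :
    |fderiv ℝ F (x + v) e - fderiv ℝ F x e - fderiv ℝ (fun y => fderiv ℝ F y e) x v|
      ≤ M * ‖v‖ ^ 2 * ‖e‖ / 2 := by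
  have hG : ContDiff ℝ 2 (fun y => fderiv ℝ F y e) :=
    (hF.fderiv_right (m := 2) le_rfl).clm_apply contDiff_const
  refine abs_sub_sub_fderiv_le_of_abs_iteratedFDeriv_two_le hG x v fun t _ => ?_
  rw [iteratedFDeriv_fderiv_apply hF]
  calc |iteratedFDeriv ℝ 3 F (x + t • v) (Fin.snoc (fun _ => v) e)|
      ≤ ‖iteratedFDeriv ℝ 3 F (x + t • v)‖ * ∏ j, ‖(Fin.snoc (fun _ => v) e : Fin 3 → E) j‖ := by
        rw [← Real.norm_eq_abs]
        exact ContinuousMultilinearMap.le_opNorm _ _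
    _ = ‖iteratedFDeriv ℝ 3 F (x + t • v)‖ * (‖v‖ ^ 2 * ‖e‖) := by
        simp only [Fin.prod_univ_castSucc, Fin.snoc_castSucc, Fin.snoc_last]
        simp [sq]
    _ ≤ M * ‖v‖ ^ 2 * ‖e‖ := by
        rw [← mul_assoc]
        gcongr
        exact hM _

end RealValued

theorem EuclideanSpace.map_eq_sum_single {𝕜 ι M : Type*} [RCLike 𝕜] [Fintype ι] [DecidableEq ι]
    [AddCommGroup M] [Module 𝕜 M] [TopologicalSpace M] (L : EuclideanSpace 𝕜 ι →L[𝕜] M)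
    {K : Finset ι} {y : EuclideanSpace 𝕜 ι} (hy : ∀ k ∉ K, y k = 0) :
    L y = ∑ k ∈ K, y k • L (EuclideanSpace.single k 1) := by
  have hsum : y = ∑ k ∈ K, y k • EuclideanSpace.single k 1 := by
    ext j
    by_cases hj : j ∈ K <;> simp [Pi.single_apply, hj, hy]
  conv_lhs => rw [hsum]
  simp only [map_sum, map_smul]

theorem decoy_saliency_hessian_bound_symmetric_general
    (d : ℕ)
    (F : EuclideanSpace ℝ (Fin d) → ℝ) (M : ℝ)
    (hF : ContDiff ℝ 3 F)
    (hM3 : ∀ z : EuclideanSpace ℝ (Fin d), ‖iteratedFDeriv ℝ 3 F z‖ ≤ M)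
    (xp xm x : EuclideanSpace ℝ (Fin d))
    (hx : x = (2 : ℝ)⁻¹ • (xp + xm))
    (K : Finset (Fin d))
    (hK : ∀ k : Fin d, k ∉ K → xp k = xm k)
    (i : Fin d) :
    abs (|fderiv ℝ F xp (EuclideanSpace.single i 1)
            - fderiv ℝ F x (EuclideanSpace.single i 1)|
        - 1 / 2 * |∑ k ∈ K, (xp k - xm k) *
            fderiv ℝ (fun z => fderiv ℝ F z (EuclideanSpace.single i 1)) x
              (EuclideanSpace.single k 1)|)
      ≤ M / 8 * ‖xp - xm‖ ^ 2 := by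
  set e : EuclideanSpace ℝ (Fin d) := EuclideanSpace.single i 1
  set S :=
    ∑ k ∈ K, (xp k - xm k) * fderiv ℝ (fun z => fderiv ℝ F z e) x (EuclideanSpace.single k 1)
  have hxp : x + (2 : ℝ)⁻¹ • (xp - xm) = xp := by rw [hx]; module
  have hS : fderiv ℝ (fun z => fderiv ℝ F z e) x ((2 : ℝ)⁻¹ • (xp - xm)) = 2⁻¹ * S := by
    rw [map_smul, EuclideanSpace.map_eq_sum_single _ fun k hk => sub_eq_zero.2 (hK k hk)]
    simp only [PiLp.sub_apply, smul_eq_mul, S]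
  have htaylor := abs_fderiv_apply_add_sub_sub_le hF hM3 x ((2 : ℝ)⁻¹ • (xp - xm)) e
  rw [hxp, hS, norm_smul, PiLp.norm_single, norm_one] at htaylor
  calc |(|fderiv ℝ F xp e - fderiv ℝ F x e| - 1 / 2 * |S|)|
      = |(|fderiv ℝ F xp e - fderiv ℝ F x e| - |2⁻¹ * S|)| := by norm_num [abs_mul]
    _ ≤ |fderiv ℝ F xp e - fderiv ℝ F x e - 2⁻¹ * S| := abs_abs_sub_abs_le_abs_sub _ _
    _ ≤ M * (‖(2 : ℝ)⁻¹‖ * ‖xp - xm‖) ^ 2 * 1 / 2 := htaylor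
    _ = M / 8 * ‖xp - xm‖ ^ 2 := by norm_num; ring

/-- Symmetric-decoy form of Theorem 1 of the paper: if the original input `x`
is the midpoint of the two decoys `x̃⁺` and `x̃⁻` (which agree off the
swappable feature set `K`), then the deviation of the decoy's vanilla gradient
saliency score from the original one equals, up to `(M/8)‖x̃⁺ - x̃⁻‖²`, one
half of the magnitude of the Hessian-weighted sum
`∑_{k ∈ K} (x̃⁺ₖ - x̃⁻ₖ)(H_x)_{k,i}`, where `M` bounds the third iterated
Fréchet derivative of `F`. -/
theorem decoy_saliency_hessian_bound_symmetric
    (d : ℕ) (hd : 0 < d)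
    (F : EuclideanSpace ℝ (Fin d) → ℝ) (M : ℝ) (hM : 0 ≤ M)
    (hF : ContDiff ℝ 3 F)
    (hM3 : ∀ z : EuclideanSpace ℝ (Fin d), ‖iteratedFDeriv ℝ 3 F z‖ ≤ M)
    (xp xm x : EuclideanSpace ℝ (Fin d))
    (hx : x = (2 : ℝ)⁻¹ • (xp + xm))
    (K : Finset (Fin d))
    (hK : ∀ k : Fin d, k ∉ K → xp k = xm k)
    (i : Fin d) :
    abs (|fderiv ℝ F xp (EuclideanSpace.single i 1)
            - fderiv ℝ F x (EuclideanSpace.single i 1)|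
        - 1 / 2 * |∑ k ∈ K, (xp k - xm k) *
            fderiv ℝ (fun z => fderiv ℝ F z (EuclideanSpace.single i 1)) x
              (EuclideanSpace.single k 1)|)
      ≤ M / 8 * ‖xp - xm‖ ^ 2 :=
  decoy_saliency_hessian_bound_symmetric_general d F M hF hM3 xp xm x hx K hK i
end

section
/- Let d be a positive natural number and let F : EuclideanSpace ℝ (Fin d) → ℝ be twice continuously differentiable with the operator norm of its second Fréchet derivative bounded by L > 0 at every point. Let x, x̂ ∈ EuclideanSpace ℝ (Fin d), fix a coordinate i, and set δ = |∂F/∂xᵢ(x̂) − ∂F/∂xᵢ(x)|. Suppose x̃¹, …, x̃ᵐ (m ≥ 1) are decoys of x satisfying ‖x̃ʲ − x‖ ≤ δ/(4L) for all j, and ŷ¹, …, ŷᵐ' (m' ≥ 1) are decoys of x̂ satisfying ‖ŷʲ − x̂‖ ≤ δ/(4L) for all j. Define Z_x = max_j ∂F/∂xᵢ(x̃ʲ) − min_j ∂F/∂xᵢ(x̃ʲ) and Z_x̂ = max_j ∂F/∂xᵢ(ŷʲ) − min_j ∂F/∂xᵢ(ŷʲ). Then |Z_x̂ − Z_x| ≤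 δ, i.e., |Z_x̂ − Z_x| ≤ |∂F/∂xᵢ(x̂) − ∂F/∂xᵢ(x)|. -/
/-- Proposition 1 of the paper (explicit-constant instantiation with
`C₂ = 1/(4L)`): if all decoys of `x` and of its adversarial perturbation `x̂`
lie within distance `δ/(4L)` of their respective inputs, where
`δ = |∂F/∂xᵢ(x̂) - ∂F/∂xᵢ(x)|` is the deviation of the vanilla gradient
saliency map and `L` bounds the operator norm of the Hessian of `F`, then the
deviation of the decoy-enhanced saliency scores (the range of the decoy
saliency scores) is at most `δ`. -/
theorem decoy_saliency_adversarial_robustness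
    (d : ℕ) (hd : 0 < d)
    (F : EuclideanSpace ℝ (Fin d) → ℝ) (L : ℝ) (hL : 0 < L)
    (hF : ContDiff ℝ 2 F)
    (hL2 : ∀ z : EuclideanSpace ℝ (Fin d), ‖iteratedFDeriv ℝ 2 F z‖ ≤ L)
    (x xhat : EuclideanSpace ℝ (Fin d)) (i : Fin d)
    (δ : ℝ)
    (hδ : δ = |fderiv ℝ F xhat (EuclideanSpace.single i 1)
                - fderiv ℝ F x (EuclideanSpace.single i 1)|)
    (m m' : ℕ) (hm : 0 < m) (hm' : 0 < m')
    (xt : Fin m → EuclideanSpace ℝ (Fin d))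
    (hxt : ∀ j : Fin m, ‖xt j - x‖ ≤ δ / (4 * L))
    (yt : Fin m' → EuclideanSpace ℝ (Fin d))
    (hyt : ∀ j : Fin m', ‖yt j - xhat‖ ≤ δ / (4 * L))
    (Zx Zxhat : ℝ)
    (hZx : Zx =
      Finset.univ.sup' ⟨⟨0, hm⟩, Finset.mem_univ _⟩
        (fun j => fderiv ℝ F (xt j) (EuclideanSpace.single i 1))
      - Finset.univ.inf' ⟨⟨0, hm⟩, Finset.mem_univ _⟩
        (fun j => fderiv ℝ F (xt j) (EuclideanSpace.single i 1)))
    (hZxhat : Zxhat =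
      Finset.univ.sup' ⟨⟨0, hm'⟩, Finset.mem_univ _⟩
        (fun j => fderiv ℝ F (yt j) (EuclideanSpace.single i 1))
      - Finset.univ.inf' ⟨⟨0, hm'⟩, Finset.mem_univ _⟩
        (fun j => fderiv ℝ F (yt j) (EuclideanSpace.single i 1))) :
    |Zxhat - Zx| ≤ |fderiv ℝ F xhat (EuclideanSpace.single i 1)
                    - fderiv ℝ F x (EuclideanSpace.single i 1)| := by
  rw [← hδ]
  have hδ0 : 0 ≤ δ := hδ ▸ abs_nonneg _
  set v : EuclideanSpace ℝ (Fin d) := EuclideanSpace.single i 1 with hv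
  have hvnorm : ‖v‖ = 1 := by
    rw [hv, EuclideanSpace.norm_single, norm_one]
  set g : EuclideanSpace ℝ (Fin d) → ℝ := fun z => fderiv ℝ F z v with hg
  -- differentiability of the gradient
  have hG : Differentiable ℝ (fderiv ℝ F) := by
    have h1 : ContDiff ℝ 1 (fderiv ℝ F) :=
      hF.fderiv_right (m := 1) (by norm_num)
    exact h1.differentiable (by norm_num)
  -- bound on the second derivative
  have hbound : ∀ z, ‖fderiv ℝ (fderiv ℝ F) z‖ ≤ L := by
    intro z
    apply ContinuousLinearMap.opNorm_le_bound _ hL.le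
    intro u
    apply ContinuousLinearMap.opNorm_le_bound _ (mul_nonneg hL.le (norm_nonneg u))
    intro w
    have h1 : fderiv ℝ (fderiv ℝ F) z u w = iteratedFDeriv ℝ 2 F z ![u, w] := by
      rw [iteratedFDeriv_two_apply]
      simp
    have h2 := (iteratedFDeriv ℝ 2 F z).le_opNorm ![u, w]
    rw [h1]
    calc ‖iteratedFDeriv ℝ 2 F z ![u, w]‖
        ≤ ‖iteratedFDeriv ℝ 2 F z‖ * ∏ j, ‖![u, w] j‖ := h2
      _ ≤ L * (‖u‖ * ‖w‖) := by
          have hprod : ∏ j, ‖![u, w] j‖ = ‖u‖ * ‖w‖ := by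
            simp [Fin.prod_univ_two]
          rw [hprod]
          exact mul_le_mul_of_nonneg_right (hL2 z)
            (mul_nonneg (norm_nonneg u) (norm_nonneg w))
      _ = L * ‖u‖ * ‖w‖ := by ring
  -- Lipschitz bound for the directional derivative
  have key : ∀ a b : EuclideanSpace ℝ (Fin d), |g a - g b| ≤ L * ‖a - b‖ := by
    intro a b
    have hlip : ‖fderiv ℝ F a - fderiv ℝ F b‖ ≤ L * ‖a - b‖ :=
      Convex.norm_image_sub_le_of_norm_fderiv_le
        (fun z _ => hG z)
        (fun z _ => hbound z) convex_univ (Set.mem_univ b) (Set.mem_univ a)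
    have h1 : g a - g b = (fderiv ℝ F a - fderiv ℝ F b) v := by
      simp [hg]
    rw [h1]
    calc |(fderiv ℝ F a - fderiv ℝ F b) v|
        ≤ ‖fderiv ℝ F a - fderiv ℝ F b‖ * ‖v‖ :=
          (fderiv ℝ F a - fderiv ℝ F b).le_opNorm v
      _ = ‖fderiv ℝ F a - fderiv ℝ F b‖ := by rw [hvnorm, mul_one]
      _ ≤ L * ‖a - b‖ := hlip
  have hq : L * (δ / (4 * L)) = δ / 4 := by
    field_simp
  -- each decoy gradient is within δ/4 of the base gradient
  have hx4 : ∀ j : Fin m, |g (xt j) - g x| ≤ δ / 4 := fun j => by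
    calc |g (xt j) - g x| ≤ L * ‖xt j - x‖ := key _ _
      _ ≤ L * (δ / (4 * L)) :=
          mul_le_mul_of_nonneg_left (hxt j) hL.le
      _ = δ / 4 := hq
  have hy4 : ∀ j : Fin m', |g (yt j) - g xhat| ≤ δ / 4 := fun j => by
    calc |g (yt j) - g xhat| ≤ L * ‖yt j - xhat‖ := key _ _
      _ ≤ L * (δ / (4 * L)) :=
          mul_le_mul_of_nonneg_left (hyt j) hL.le
      _ = δ / 4 := hq
  -- range bounds: 0 ≤ Zx ≤ δ/2 and 0 ≤ Zxhat ≤ δ/2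
  have range_bound : ∀ (n : ℕ) (hn : 0 < n) (w : Fin n → EuclideanSpace ℝ (Fin d))
      (c : EuclideanSpace ℝ (Fin d)) (hw : ∀ j, |g (w j) - g c| ≤ δ / 4),
      0 ≤ Finset.univ.sup' ⟨⟨0, hn⟩, Finset.mem_univ _⟩ (fun j => g (w j))
          - Finset.univ.inf' ⟨⟨0, hn⟩, Finset.mem_univ _⟩ (fun j => g (w j)) ∧
      Finset.univ.sup' ⟨⟨0, hn⟩, Finset.mem_univ _⟩ (fun j => g (w j))
          - Finset.univ.inf' ⟨⟨0, hn⟩, Finset.mem_univ _⟩ (fun j => g (w j)) ≤ δ / 2 := by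
    intro n hn w c hw
    have hsup_le : Finset.univ.sup' ⟨⟨0, hn⟩, Finset.mem_univ _⟩ (fun j => g (w j))
        ≤ g c + δ / 4 := by
      apply Finset.sup'_le
      intro j _
      have := (abs_le.mp (hw j)).2
      linarith
    have hinf_ge : g c - δ / 4
        ≤ Finset.univ.inf' ⟨⟨0, hn⟩, Finset.mem_univ _⟩ (fun j => g (w j)) := by
      apply Finset.le_inf'
      intro j _
      have := (abs_le.mp (hw j)).1
      linarith
    have hle : Finset.univ.inf' ⟨⟨0, hn⟩, Finset.mem_univ _⟩ (fun j => g (w j))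
        ≤ Finset.univ.sup' ⟨⟨0, hn⟩, Finset.mem_univ _⟩ (fun j => g (w j)) :=
      le_trans (Finset.inf'_le (fun j => g (w j)) (Finset.mem_univ (⟨0, hn⟩ : Fin n)))
        (Finset.le_sup' (fun j => g (w j)) (Finset.mem_univ (⟨0, hn⟩ : Fin n)))
    constructor
    · linarith
    · linarith
  obtain ⟨hZx0, hZxhalf⟩ := range_bound m hm xt x hx4
  obtain ⟨hZxh0, hZxhhalf⟩ := range_bound m' hm' yt xhat hy4
  rw [← hZx] at hZx0 hZxhalf
  rw [← hZxhat] at hZxh0 hZxhhalf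
  rw [abs_sub_le_iff]
  constructor <;> linarith
end

section
/- Let d be a positive natural number and let F : EuclideanSpace ℝ (Fin d) → ℝ be twice continuously differentiable with the operator norm of its second Fréchet derivative bounded by L ≥ 0 at every point. Let x ∈ EuclideanSpace ℝ (Fin d) and let x̃¹, …, x̃ᵐ (m ≥ 1) satisfy ‖x̃ʲ − x‖ ≤ r for all j. Then for every coordinate i, the decoy-enhanced saliency score Zᵢ = max_j ∂F/∂xᵢ(x̃ʲ) − min_j ∂F/∂xᵢ(x̃ʲ) satisfies 0 ≤ Zᵢ ≤ 2·L·r. -/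
/-! The gradient of `F` is `L`-Lipschitz by the mean value inequality applied to `fderiv F`,
whose derivative has the norm of the Hessian. Two decoys are at distance at most `2r`, so the
`i`-th partial derivatives at them differ by at most `2Lr`, and the range of a finite family is
the largest such difference. -/

theorem norm_fderiv_sub_fderiv_le {𝕜 E F : Type*} [RCLike 𝕜] [NormedAddCommGroup E]
    [NormedSpace 𝕜 E] [NormedAddCommGroup F] [NormedSpace 𝕜 F] {f : E → F} {L : ℝ}
    (hf : ContDiff 𝕜 2 f) (hL : ∀ z, ‖iteratedFDeriv 𝕜 2 f z‖ ≤ L) (a b : E) :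
    ‖fderiv 𝕜 f a - fderiv 𝕜 f b‖ ≤ L * ‖a - b‖ := by
  let : NormedSpace ℝ E := .restrictScalars ℝ 𝕜 E
  have hdiff : Differentiable 𝕜 (fderiv 𝕜 f) :=
    (hf.fderiv_right (m := 1) le_rfl).differentiable one_ne_zero
  have hbound (z : E) : ‖fderiv 𝕜 (fderiv 𝕜 f) z‖ ≤ L := by
    rw [← norm_iteratedFDeriv_one, norm_iteratedFDeriv_fderiv]
    exact hL z
  exact convex_univ.norm_image_sub_le_of_norm_fderiv_le (fun z _ => hdiff z)
    (fun z _ => hbound z) (Set.mem_univ b) (Set.mem_univ a)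

theorem Finset.inf'_le_sup' {ι α : Type*} [Lattice α] {s : Finset ι} (hs : s.Nonempty)
    (f : ι → α) : s.inf' hs f ≤ s.sup' hs f :=
  let ⟨_, hi⟩ := hs
  (s.inf'_le f hi).trans (s.le_sup' f hi)

theorem Finset.sup'_sub_inf'_le {ι α : Type*} [AddCommGroup α] [LinearOrder α]
    [IsOrderedAddMonoid α] {s : Finset ι} (hs : s.Nonempty) {f : ι → α} {C : α}
    (h : ∀ i ∈ s, ∀ j ∈ s, f i - f j ≤ C) : s.sup' hs f - s.inf' hs f ≤ C := by
  obtain ⟨i, hi, hsup⟩ := s.exists_mem_eq_sup' hs f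
  obtain ⟨j, hj, hinf⟩ := s.exists_mem_eq_inf' hs f
  rw [hsup, hinf]
  exact h i hi j hj

theorem decoy_saliency_range_bound_general
    (d : ℕ)
    (F : EuclideanSpace ℝ (Fin d) → ℝ) (L : ℝ)
    (hF : ContDiff ℝ 2 F)
    (hL2 : ∀ z : EuclideanSpace ℝ (Fin d), ‖iteratedFDeriv ℝ 2 F z‖ ≤ L)
    (x : EuclideanSpace ℝ (Fin d)) (r : ℝ)
    (m : ℕ) (hm : 0 < m)
    (xt : Fin m → EuclideanSpace ℝ (Fin d))
    (hxt : ∀ j : Fin m, ‖xt j - x‖ ≤ r)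
    (i : Fin d) (Z : ℝ)
    (hZ : Z =
      Finset.univ.sup' ⟨⟨0, hm⟩, Finset.mem_univ _⟩
        (fun j => fderiv ℝ F (xt j) (EuclideanSpace.single i 1))
      - Finset.univ.inf' ⟨⟨0, hm⟩, Finset.mem_univ _⟩
        (fun j => fderiv ℝ F (xt j) (EuclideanSpace.single i 1))) :
    0 ≤ Z ∧ Z ≤ 2 * L * r := by
  set e : EuclideanSpace ℝ (Fin d) := EuclideanSpace.single i 1
  have hL : 0 ≤ L := (norm_nonneg _).trans (hL2 x)
  have he : ‖e‖ = 1 := by simp [e]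
  subst hZ
  refine ⟨sub_nonneg.2 (Finset.inf'_le_sup' _ _), Finset.sup'_sub_inf'_le _ fun j _ k _ => ?_⟩
  calc fderiv ℝ F (xt j) e - fderiv ℝ F (xt k) e
      ≤ ‖fderiv ℝ F (xt j) - fderiv ℝ F (xt k)‖ * ‖e‖ :=
        (le_abs_self _).trans ((fderiv ℝ F (xt j) - fderiv ℝ F (xt k)).le_opNorm e)
    _ ≤ L * ‖xt j - xt k‖ := by
        rw [he, mul_one]; exact norm_fderiv_sub_fderiv_le hF hL2 _ _
    _ ≤ L * (r + r) := by
        gcongr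
        exact (norm_sub_le_norm_sub_add_norm_sub _ x _).trans
          (add_le_add (hxt j) (norm_sub_rev x (xt k) ▸ hxt k))
    _ = 2 * L * r := by ring

/-- Key bound in the proof of Proposition 1 of the paper: if all decoys
`x̃¹, …, x̃ᵐ` of `x` lie within radius `r` of `x` and the Hessian of `F` is
uniformly bounded in operator norm by `L` (so the gradient of `F` is
`L`-Lipschitz), then the decoy-enhanced saliency score of each feature `i`—the
range of the vanilla gradient saliency scores over the decoys—is nonnegative
and at most `2·L·r`. -/
theorem decoy_saliency_range_bound
    (d : ℕ) (hd : 0 < d)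
    (F : EuclideanSpace ℝ (Fin d) → ℝ) (L : ℝ) (hL : 0 ≤ L)
    (hF : ContDiff ℝ 2 F)
    (hL2 : ∀ z : EuclideanSpace ℝ (Fin d), ‖iteratedFDeriv ℝ 2 F z‖ ≤ L)
    (x : EuclideanSpace ℝ (Fin d)) (r : ℝ)
    (m : ℕ) (hm : 0 < m)
    (xt : Fin m → EuclideanSpace ℝ (Fin d))
    (hxt : ∀ j : Fin m, ‖xt j - x‖ ≤ r)
    (i : Fin d) (Z : ℝ)
    (hZ : Z =
      Finset.univ.sup' ⟨⟨0, hm⟩, Finset.mem_univ _⟩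
        (fun j => fderiv ℝ F (xt j) (EuclideanSpace.single i 1))
      - Finset.univ.inf' ⟨⟨0, hm⟩, Finset.mem_univ _⟩
        (fun j => fderiv ℝ F (xt j) (EuclideanSpace.single i 1))) :
    0 ≤ Z ∧ Z ≤ 2 * L * r :=
  decoy_saliency_range_bound_general d F L hF hL2 x r m hm xt hxt i Z hZ
end
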